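/- arXiv:1501.07474 — 6 statements merged into one kernel-verified Lean document; each statement's English description precedes it below -/
import Mathlib

section
/- The expression N(J_1, ..., J_s) = ∑_{ℓ=2}^{s} (|⋂_{m=1}^{ℓ-1} J_m \ J_ℓ| + |J_ℓ|) is invariant under permutation of the sets J_1, ..., J_s. -/
/-!
Allow also the index `ℓ = 0`, where the empty intersection is the whole universe. The sets
`(⋂_{m<ℓ} J_m) \ J_ℓ` are then pairwise disjoint with union the complement of `⋂_m J_m`: a point
outside it lies in the one indexed by the first `ℓ` with `x ∉ J_ℓ`. So the extended sum equals
`|(⋂_m J_m)ᶜ| + ∑_ℓ |J_ℓ|`, which is symmetric in the `J_ℓ`, and the extra term is always `n`.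
-/

open Finset

namespace Finset

lemma inf_univ_comp_perm {ι β : Type*} [Fintype ι] [SemilatticeInf β] [OrderTop β] (f : ι → β)
    (σ : Equiv.Perm ι) : univ.inf (f ∘ σ) = univ.inf f := by
  simpa [map_univ_equiv] using (inf_map univ σ.toEmbedding f).symm

variable {ι α : Type*} [Fintype ι] [LinearOrder ι] [Fintype α] [DecidableEq α]

def prefixInf (J : ι → Finset α) (ℓ : ι) : Finset α :=
  (univ.filter (· < ℓ)).inf J

lemma mem_prefixInf {J : ι → Finset α} {ℓ : ι} {x : α} :
    x ∈ prefixInf J ℓ ↔ ∀ m < ℓ, x ∈ J m := by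
  simp [prefixInf, mem_inf]

lemma prefixInf_of_isMin (J : ι → Finset α) {ℓ : ι} (hℓ : IsMin ℓ) : prefixInf J ℓ = univ := by
  ext x
  simp only [mem_prefixInf, mem_univ, iff_true]
  exact fun m hm => absurd hm hℓ.not_lt

lemma pairwiseDisjoint_prefixInf_sdiff (J : ι → Finset α) :
    (Set.univ : Set ι).PairwiseDisjoint fun ℓ => prefixInf J ℓ \ J ℓ := by
  have key {ℓ m : ι} (hlt : ℓ < m) : Disjoint (prefixInf J ℓ \ J ℓ) (prefixInf J m \ J m) :=
    disjoint_left.2 fun _ hxℓ hxm => (mem_sdiff.1 hxℓ).2 (mem_prefixInf.1 (mem_sdiff.1 hxm).1 ℓ hlt)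
  intro ℓ _ m _ hne
  rcases hne.lt_or_gt with hlt | hlt
  · exact key hlt
  · exact (key hlt).symm

lemma biUnion_prefixInf_sdiff (J : ι → Finset α) :
    univ.biUnion (fun ℓ => prefixInf J ℓ \ J ℓ) = (univ.inf J)ᶜ := by
  ext x
  simp only [mem_biUnion, mem_univ, true_and, mem_sdiff, mem_prefixInf, mem_compl, mem_inf,
    forall_const, not_forall]
  constructor
  · rintro ⟨ℓ, -, hℓ⟩
    exact ⟨ℓ, hℓ⟩
  · rintro ⟨ℓ₀, hℓ₀⟩
    obtain ⟨ℓ, hℓ, hmin⟩ := wellFounded_lt.has_min {ℓ | x ∉ J ℓ} ⟨ℓ₀, hℓ₀⟩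
    exact ⟨ℓ, fun m hm => by_contra fun h => hmin m h hm, hℓ⟩

lemma sum_card_prefixInf_sdiff (J : ι → Finset α) :
    ∑ ℓ, #(prefixInf J ℓ \ J ℓ) = #(univ.inf J)ᶜ := by
  rw [← biUnion_prefixInf_sdiff, card_biUnion]
  simpa using pairwiseDisjoint_prefixInf_sdiff J

lemma sum_card_prefixInf_sdiff_add_card_comp_perm (J : ι → Finset α) (σ : Equiv.Perm ι) :
    ∑ ℓ, (#(prefixInf (J ∘ σ) ℓ \ (J ∘ σ) ℓ) + #((J ∘ σ) ℓ)) =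
      ∑ ℓ, (#(prefixInf J ℓ \ J ℓ) + #(J ℓ)) := by
  simp only [sum_add_distrib]
  rw [sum_card_prefixInf_sdiff, sum_card_prefixInf_sdiff, inf_univ_comp_perm]
  exact congrArg _ (Equiv.sum_comp σ fun ℓ => #(J ℓ))

lemma card_prefixInf_sdiff_add_card_of_isMin (J : ι → Finset α) {ℓ : ι} (hℓ : IsMin ℓ) :
    #(prefixInf J ℓ \ J ℓ) + #(J ℓ) = Fintype.card α := by
  rw [prefixInf_of_isMin J hℓ, card_sdiff_add_card_eq_card (subset_univ _), card_univ]

end Finset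

theorem stmt_3_general (n s : ℕ) (J : Fin s → Finset (Fin n)) (σ : Equiv.Perm (Fin s)) :
    (∑ ℓ ∈ Finset.univ.filter (fun ℓ : Fin s => 1 ≤ ℓ.val),
      ((((Finset.univ.filter (fun m : Fin s => m < ℓ)).inf (J ∘ σ)) \ (J ∘ σ) ℓ).card
        + ((J ∘ σ) ℓ).card)) =
    ∑ ℓ ∈ Finset.univ.filter (fun ℓ : Fin s => 1 ≤ ℓ.val),
      ((((Finset.univ.filter (fun m : Fin s => m < ℓ)).inf J) \ J ℓ).card + (J ℓ).card) := by
  have hmin : ∀ K : Fin s → Finset (Fin n), ∀ ℓ ∈ univ.filter (fun ℓ : Fin s => ¬ 1 ≤ ℓ.val),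
      #(prefixInf K ℓ \ K ℓ) + #(K ℓ) = n := fun K ℓ hℓ => by
    rw [card_prefixInf_sdiff_add_card_of_isMin K, Fintype.card_fin]
    intro m _
    simp only [mem_filter] at hℓ
    exact Fin.le_def.2 (by omega)
  have hJσ := sum_filter_add_sum_filter_not univ (fun ℓ : Fin s => 1 ≤ ℓ.val)
    fun ℓ => #(prefixInf (J ∘ σ) ℓ \ (J ∘ σ) ℓ) + #((J ∘ σ) ℓ)
  have hJ := sum_filter_add_sum_filter_not univ (fun ℓ : Fin s => 1 ≤ ℓ.val)
    fun ℓ => #(prefixInf J ℓ \ J ℓ) + #(J ℓ)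
  rw [sum_congr rfl (hmin (J ∘ σ))] at hJσ
  rw [sum_congr rfl (hmin J)] at hJ
  have hperm := sum_card_prefixInf_sdiff_add_card_comp_perm J σ
  exact Nat.add_right_cancel (hJσ.trans (hperm.trans hJ.symm))

/-- `N(J_1, ..., J_s) = ∑_{ℓ=2}^{s} (|⋂_{m=1}^{ℓ-1} J m \ J ℓ| + |J ℓ|)` is invariant under
permutations of the sets `J_1, ..., J_s` (indices written `0, ..., s-1` here). -/
theorem stmt_3 (n s : ℕ) (hs : 2 ≤ s) (J : Fin s → Finset (Fin n)) (σ : Equiv.Perm (Fin s)) :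
    (∑ ℓ ∈ Finset.univ.filter (fun ℓ : Fin s => 1 ≤ ℓ.val),
      ((((Finset.univ.filter (fun m : Fin s => m < ℓ)).inf (J ∘ σ)) \ (J ∘ σ) ℓ).card
        + ((J ∘ σ) ℓ).card)) =
    ∑ ℓ ∈ Finset.univ.filter (fun ℓ : Fin s => 1 ≤ ℓ.val),
      ((((Finset.univ.filter (fun m : Fin s => m < ℓ)).inf J) \ J ℓ).card + (J ℓ).card) :=
  stmt_3_general n s J σ
end

section
/- Let K be the abstract simplicial complex on [n] whose simplexes are all subsets of cardinality at most d, where 1 ≤ d ≤ n. Then the maximum over all choices of s simplexes J_1, ..., J_s of K of the quantity ∑_{ℓ=1}^{s} |J_ℓ| − |⋂_{ℓ=1}^{s} J_ℓ| equals min{s·d, (s−1)·n}. -/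
/-!
Write `N = |α|` and `m = N - d`. For the upper bound, `∑ |J ℓ| ≤ s d` is trivial, and the union
bound applied to the complements, `|(⋂ J ℓ)ᶜ| ≤ ∑ |(J ℓ)ᶜ|`, gives `∑ |J ℓ| ≤ (s - 1) N + |⋂ J ℓ|`.
For the lower bound, choose the `d`-sets one at a time so that each new one meets the running
intersection `I` in at most `|I| - m` points (inside `Iᶜ` if it fits there, around `Iᶜ` otherwise).
The final intersection then has at most `N - s m` points, which makes both bounds sharp.
-/

open Finset

variable {ι α : Type*} [Fintype α] [DecidableEq α]

theorem Finset.sum_card_add_card_le_card_mul_add_card_inf [Fintype ι] (J : ι → Finset α) :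
    ∑ i, #(J i) + Fintype.card α ≤ Fintype.card ι * Fintype.card α + #(univ.inf J) := by
  have hcompl : ∑ i, (#(J i) + #(J i)ᶜ) = Fintype.card ι * Fintype.card α := by
    simp [card_add_card_compl]
  have hunion : #(univ.inf J)ᶜ ≤ ∑ i, #(J i)ᶜ := by
    rw [Finset.compl_inf, sup_eq_biUnion]
    exact card_biUnion_le
  have hinf := card_add_card_compl (univ.inf J)
  rw [sum_add_distrib] at hcompl
  omega

theorem Finset.exists_card_eq_card_inter_le (I : Finset α) {d : ℕ} (hd : d ≤ Fintype.card α) :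
    ∃ D : Finset α, #D = d ∧ #(I ∩ D) ≤ #I - (Fintype.card α - d) := by
  have hI := card_add_card_compl I
  rcases le_total d #Iᶜ with hfit | hfit
  · obtain ⟨D, -, hD, hDcard⟩ := exists_subsuperset_card_eq (empty_subset Iᶜ) (by simp) hfit
    have hdisj : I ∩ D = ∅ := by
      rw [← disjoint_iff_inter_eq_empty]
      exact disjoint_of_subset_right hD disjoint_compl_right
    exact ⟨D, hDcard, by simp [hdisj]⟩
  · obtain ⟨D, hD, -, hDcard⟩ :=
      exists_subsuperset_card_eq (subset_univ Iᶜ) hfit (by simpa using hd)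
    have hsplit : #(D ∩ I) + #Iᶜ = #D := by
      rw [← card_inter_add_card_sdiff D I, sdiff_eq_inter_compl, inter_eq_right.mpr hD]
    refine ⟨D, hDcard, ?_⟩
    rw [inter_comm]
    omega

theorem Finset.exists_card_eq_card_inf_le (s : ℕ) {d : ℕ} (hd : d ≤ Fintype.card α) :
    ∃ J : Fin s → Finset α, (∀ i, #(J i) = d) ∧
      #(univ.inf J) ≤ Fintype.card α - s * (Fintype.card α - d) := by
  induction s with
  | zero => exact ⟨Fin.elim0, Fin.rec0, by simp⟩
  | succ s ih =>
    obtain ⟨J, hJ, hinf⟩ := ih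
    obtain ⟨D, hD, hDinf⟩ := exists_card_eq_card_inter_le (univ.inf J) hd
    have hcons : univ.inf (Fin.cons D J : Fin (s + 1) → Finset α) = univ.inf J ∩ D := by
      ext x
      simp [mem_inf, Fin.forall_fin_succ, and_comm]
    refine ⟨Fin.cons D J, Fin.cases hD hJ, ?_⟩
    rw [hcons, Nat.succ_mul]
    omega

theorem stmt_6_general (n d s : ℕ) (hdn : d ≤ n) :
    IsGreatest {k : ℕ | ∃ J : Fin s → Finset (Fin n), (∀ i, (J i).card ≤ d) ∧
      k = (∑ i, (J i).card) - (Finset.univ.inf J).card}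
      (min (s * d) ((s - 1) * n)) := by
  have hsd : s * (n - d) + s * d = s * n := by rw [← Nat.mul_add, Nat.sub_add_cancel hdn]
  have hsn : (s - 1) * n = s * n - n := Nat.sub_one_mul s n
  have upper : ∀ J : Fin s → Finset (Fin n), (∀ i, #(J i) ≤ d) →
      ∑ i, #(J i) - #(univ.inf J) ≤ min (s * d) ((s - 1) * n) := by
    intro J hJ
    have hsum : ∑ i, #(J i) ≤ s * d := by
      simpa using sum_le_sum fun i (_ : i ∈ univ) => hJ i
    have hunion := sum_card_add_card_le_card_mul_add_card_inf J
    simp only [Fintype.card_fin] at hunion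
    omega
  obtain ⟨J, hJ, hinf⟩ := exists_card_eq_card_inf_le (α := Fin n) s (by simpa using hdn)
  simp only [Fintype.card_fin] at hinf
  have hsum : ∑ i, #(J i) = s * d := by simp [hJ]
  refine ⟨⟨J, fun i => (hJ i).le, le_antisymm ?_ (upper J fun i => (hJ i).le)⟩, ?_⟩
  · omega
  · rintro k ⟨J, hJ, rfl⟩
    exact upper J hJ

/-- For `K = Δ[n−1]^{d−1}` (all subsets of `[n]` with at most `d` elements), the maximum
of `∑ |J ℓ| − |⋂ J ℓ|` over `s`-tuples of simplexes equals `min (s*d) ((s−1)*n)`. -/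
theorem stmt_6 (n d s : ℕ) (hd1 : 1 ≤ d) (hdn : d ≤ n) (hs : 2 ≤ s) :
    IsGreatest {k : ℕ | ∃ J : Fin s → Finset (Fin n), (∀ i, (J i).card ≤ d) ∧
      k = (∑ i, (J i).card) - (Finset.univ.inf J).card}
      (min (s * d) ((s - 1) * n)) :=
  stmt_6_general n d s hdn
end

section
/- Let K be a finite simplicial complex on [n] with w maximal simplexes and d = 1 + dim K. Then for every s ≥ w, N^s(K) = d(s − w) + N^w(K), where N^s(K) is the maximum over s-tuples of simplexes (J_1, ..., J_s) of ∑_{i=1}^{s}|J_i| − |⋂_{i=1}^{s} J_i|. -/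
/-!
Enlarging every `J i` to a facet containing it does not decrease `∑ |J i| - |⋂ J i|`: the
intersection grows by at most what the sets gain. Once there are more entries than facets, two
of these facets coincide, and dropping one copy leaves the intersection unchanged, so
`N^(s+1) ≤ d + N^s` for `s ≥ w`. Conversely, prepending a simplex of maximal size `d` to an
optimal tuple adds `d` to the sum and cannot enlarge the intersection.
-/

open Finset

variable {α ι : Type*} [DecidableEq α] [Fintype α] [Fintype ι]

def excess (J : ι → Finset α) : ℕ :=
  ∑ i, #(J i) - #(univ.inf J)

lemma card_inf_le_sum_card [Nonempty ι] (J : ι → Finset α) : #(univ.inf J) ≤ ∑ i, #(J i) := by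
  obtain ⟨i⟩ := ‹Nonempty ι›
  exact (card_le_card (inf_le (mem_univ i))).trans
    (single_le_sum (f := fun i ↦ #(J i)) (fun _ _ ↦ Nat.zero_le _) (mem_univ i))

lemma card_inf_add_sum_card_le {J M : ι → Finset α} (hJM : ∀ i, J i ⊆ M i) :
    #(univ.inf M) + ∑ i, #(J i) ≤ #(univ.inf J) + ∑ i, #(M i) := by
  have hdiff : univ.inf M \ univ.inf J ⊆ univ.biUnion fun i ↦ M i \ J i := by
    intro x hx
    simp only [mem_sdiff, mem_inf, mem_univ, true_implies, not_forall] at hx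
    obtain ⟨hM, i, hi⟩ := hx
    exact mem_biUnion.2 ⟨i, mem_univ i, mem_sdiff.2 ⟨hM i, hi⟩⟩
  have hsum : ∑ i, #(M i \ J i) + ∑ i, #(J i) = ∑ i, #(M i) := by
    rw [← sum_add_distrib]
    exact sum_congr rfl fun i _ ↦ card_sdiff_add_card_eq_card (hJM i)
  calc #(univ.inf M) + ∑ i, #(J i)
      ≤ #(univ.inf M \ univ.inf J) + #(univ.inf J) + ∑ i, #(J i) := by
        gcongr; exact card_le_card_sdiff_add_card
    _ ≤ ∑ i, #(M i \ J i) + #(univ.inf J) + ∑ i, #(J i) := by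
        gcongr; exact (card_le_card hdiff).trans card_biUnion_le
    _ = #(univ.inf J) + ∑ i, #(M i) := by rw [← hsum]; ring

lemma excess_mono {J M : ι → Finset α} (hJM : ∀ i, J i ⊆ M i) : excess J ≤ excess M := by
  have := card_inf_add_sum_card_le hJM
  unfold excess
  omega

lemma excess_le_card_add_excess_succAbove {m : ℕ} {M : Fin (m + 1) → Finset α}
    {i j : Fin (m + 1)} (hij : i ≠ j) (hM : M i = M j) :
    excess M ≤ #(M j) + excess (M ∘ j.succAbove) := by
  have hinf : univ.inf (M ∘ j.succAbove) = univ.inf M := by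
    obtain ⟨i', rfl⟩ := Fin.exists_succAbove_eq hij
    ext x
    simp only [mem_inf, mem_univ, true_implies, Function.comp_apply]
    refine ⟨fun h k ↦ ?_, fun h k ↦ h _⟩
    rcases Fin.eq_self_or_eq_succAbove j k with rfl | ⟨k, rfl⟩
    · exact hM ▸ h i'
    · exact h k
  unfold excess
  rw [Fin.sum_univ_succAbove _ j, ← hinf]
  simp only [Function.comp_apply]
  omega

lemma add_excess_le_excess_cons {m : ℕ} (A : Finset α) (J : Fin (m + 1) → Finset α) :
    #A + excess J ≤ excess (Fin.cons A J : Fin (m + 2) → Finset α) := by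
  have hinf : univ.inf (Fin.cons A J : Fin (m + 2) → Finset α) ⊆ univ.inf J :=
    Finset.le_inf fun i _ ↦
      inf_le (f := (Fin.cons A J : Fin (m + 2) → Finset α)) (mem_univ i.succ)
  have := card_le_card hinf
  have := card_inf_le_sum_card J
  unfold excess
  rw [Fin.sum_univ_succ (f := fun i ↦ #((Fin.cons A J : Fin (m + 2) → Finset α) i))]
  simp only [Fin.cons_zero, Fin.cons_succ]
  omega

def facets (K : Finset (Finset α)) : Finset (Finset α) :=
  K.filter fun A ↦ ∀ B ∈ K, A ⊆ B → A = B

lemma exists_mem_facets_superset {K : Finset (Finset α)} {A : Finset α} (hA : A ∈ K) :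
    ∃ M ∈ facets K, A ⊆ M := by
  obtain ⟨M, hAM, hM⟩ := K.exists_le_maximal hA
  exact ⟨M, mem_filter.2 ⟨hM.1, fun B hB hMB ↦ le_antisymm hMB (hM.2 hB hMB)⟩, hAM⟩

/-- `N^s(K)` is the greatest element of `excessValues K s`. -/
def excessValues (K : Finset (Finset α)) (s : ℕ) : Set ℕ :=
  {k | ∃ J : Fin s → Finset α, (∀ i, J i ∈ K) ∧ k = excess J}

lemma exists_excess_le_sup_card_add {K : Finset (Finset α)} {m : ℕ} (hK : #(facets K) < m + 1)
    {J : Fin (m + 1) → Finset α} (hJ : ∀ i, J i ∈ K) :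
    ∃ N : Fin m → Finset α, (∀ i, N i ∈ K) ∧ excess J ≤ K.sup card + excess N := by
  choose M hMK hJM using fun i ↦ exists_mem_facets_superset (hJ i)
  obtain ⟨i, -, j, -, hij, hMij⟩ := exists_ne_map_eq_of_card_lt_of_maps_to
    (by rwa [card_univ, Fintype.card_fin]) (fun i _ ↦ hMK i)
  refine ⟨M ∘ j.succAbove, fun k ↦ (mem_filter.1 (hMK _)).1, ?_⟩
  calc excess J ≤ excess M := excess_mono hJM
    _ ≤ #(M j) + excess (M ∘ j.succAbove) := excess_le_card_add_excess_succAbove hij hMij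
    _ ≤ K.sup card + excess (M ∘ j.succAbove) := by
        gcongr; exact le_sup (f := card) (mem_filter.1 (hMK j)).1

lemma isGreatest_excessValues_succ {K : Finset (Finset α)} (hK : K.Nonempty) {m a : ℕ}
    (hm : #(facets K) ≤ m) (ha : IsGreatest (excessValues K m) a) :
    IsGreatest (excessValues K (m + 1)) (a + K.sup card) := by
  obtain ⟨A, hA⟩ := hK
  obtain ⟨m, rfl⟩ : ∃ m', m = m' + 1 := Nat.exists_eq_succ_of_ne_zero <| by
    obtain ⟨M, hM, -⟩ := exists_mem_facets_superset hA
    have := card_pos.2 ⟨M, hM⟩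
    omega
  have hupper : a + K.sup card ∈ upperBounds (excessValues K (m + 2)) := by
    rintro _ ⟨J, hJ, rfl⟩
    obtain ⟨N, hN, hJN⟩ := exists_excess_le_sup_card_add (by omega) hJ
    have := ha.2 ⟨N, hN, rfl⟩
    omega
  obtain ⟨D, hD, hDcard⟩ := exists_mem_eq_sup K ⟨A, hA⟩ card
  obtain ⟨J, hJ, rfl⟩ := ha.1
  have hDJ : ∀ i, (Fin.cons D J : Fin (m + 2) → Finset α) i ∈ K := Fin.cases hD hJ
  have hmem : excess (Fin.cons D J : Fin (m + 2) → Finset α) ∈ excessValues K (m + 2) :=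
    ⟨_, hDJ, rfl⟩
  have hlower := add_excess_le_excess_cons D J
  have := hupper hmem
  refine ⟨?_, hupper⟩
  convert hmem using 1
  omega

theorem stmt_12_general (n w s : ℕ) (K : Finset (Finset (Fin n)))
    (hne : K.Nonempty)
    (hw : (K.filter (fun A => ∀ B ∈ K, A ⊆ B → A = B)).card = w)
    (d : ℕ) (hd : d = K.sup Finset.card)
    (hsw : w ≤ s) (a : ℕ)
    (ha : IsGreatest {k : ℕ | ∃ J : Fin w → Finset (Fin n), (∀ i, J i ∈ K) ∧
      k = (∑ i, (J i).card) - (Finset.univ.inf J).card} a) :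
    IsGreatest {k : ℕ | ∃ J : Fin s → Finset (Fin n), (∀ i, J i ∈ K) ∧
      k = (∑ i, (J i).card) - (Finset.univ.inf J).card} (d * (s - w) + a) := by
  change IsGreatest (excessValues K w) a at ha
  change #(facets K) = w at hw
  change IsGreatest (excessValues K s) _
  obtain ⟨k, rfl⟩ := Nat.exists_eq_add_of_le hsw
  clear hsw
  rw [Nat.add_sub_cancel_left, hd]
  induction k with
  | zero => simpa using ha
  | succ k ih =>
    rw [← add_assoc, mul_add_one, add_right_comm (K.sup card * k)]
    exact isGreatest_excessValues_succ hne (by omega) ih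

/-- If `K` is a simplicial complex on `[n]` with exactly `w` maximal simplexes and
`d = 1 + dim K`, then for `s ≥ w`, `N^s(K) = d(s − w) + N^w(K)`. -/
theorem stmt_12 (n w s : ℕ) (K : Finset (Finset (Fin n)))
    (hne : K.Nonempty) (hdc : ∀ A ∈ K, ∀ B ⊆ A, B ∈ K)
    (hw : (K.filter (fun A => ∀ B ∈ K, A ⊆ B → A = B)).card = w)
    (d : ℕ) (hd : d = K.sup Finset.card)
    (hsw : w ≤ s) (a : ℕ)
    (ha : IsGreatest {k : ℕ | ∃ J : Fin w → Finset (Fin n), (∀ i, J i ∈ K) ∧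
      k = (∑ i, (J i).card) - (Finset.univ.inf J).card} a) :
    IsGreatest {k : ℕ | ∃ J : Fin s → Finset (Fin n), (∀ i, J i ∈ K) ∧
      k = (∑ i, (J i).card) - (Finset.univ.inf J).card} (d * (s - w) + a) :=
  stmt_12_general n w s K hne hw d hd hsw a ha
end

section
/- Let K_X and K_Y be simplicial complexes on disjoint vertex sets, with d_X = 1 + dim K_X ≥ d_Y = 1 + dim K_Y, and let K = K_X ⊔ K_Y be their disjoint union. Then N^s(K) = max{N^s(K_X), N^s(K_Y), (s−1)·d_X + d_Y}, where N^s of a complex is the maximum over s-tuples of simplexes of ∑|J_i| − |⋂ J_i|. -/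
/-!
Two faces from different components are disjoint, so an `s`-tuple of faces of `K_X ⊔ K_Y` that
meets both components has empty intersection and its value is just `∑ |J_i|`; since every face
of `K_Y` is at most as large as a maximal face of `K_X`, this is at most `(s - 1) d_X + d_Y`.
Tuples inside a single component give `N^s(K_X)` or `N^s(K_Y)`, and one maximal face of `K_Y`
together with `s - 1` copies of a maximal face of `K_X` attains `(s - 1) d_X + d_Y`.
-/

open Finset

namespace SimplicialExcess

variable {α : Type*} [Fintype α] [DecidableEq α] {s : ℕ}

/-- The paper's `N^s(L)` is `sSup (excessSet s L)`. -/
def excess (J : Fin s → Finset α) : ℕ :=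
  (∑ i, (J i).card) - (univ.inf J).card

def excessSet (s : ℕ) (L : Finset (Finset α)) : Set ℕ :=
  {k | ∃ J : Fin s → Finset α, (∀ i, J i ∈ L) ∧ k = excess J}

lemma excessSet_nonempty {L : Finset (Finset α)} (hL : L.Nonempty) :
    (excessSet s L).Nonempty :=
  let ⟨A, hA⟩ := hL
  ⟨_, fun _ => A, fun _ => hA, rfl⟩

lemma bddAbove_excessSet (L : Finset (Finset α)) : BddAbove (excessSet s L) :=
  ((Set.finite_range excess).subset <| by rintro _ ⟨J, -, rfl⟩; exact ⟨J, rfl⟩).bddAbove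

lemma excess_le_csSup {L : Finset (Finset α)} {J : Fin s → Finset α} (hJ : ∀ i, J i ∈ L) :
    excess J ≤ sSup (excessSet s L) :=
  le_csSup (bddAbove_excessSet L) ⟨J, hJ, rfl⟩

lemma csSup_excessSet_mono {L L' : Finset (Finset α)} (hL : L.Nonempty) (h : L ⊆ L') :
    sSup (excessSet s L) ≤ sSup (excessSet s L') :=
  csSup_le_csSup (bddAbove_excessSet L') (excessSet_nonempty hL)
    fun _ ⟨J, hJ, hk⟩ => ⟨J, fun i => h (hJ i), hk⟩

lemma excess_eq_sum_of_disjoint {J : Fin s → Finset α} {i j : Fin s}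
    (hij : Disjoint (J i) (J j)) : excess J = ∑ i, (J i).card := by
  have hinf : univ.inf J = ∅ :=
    disjoint_self.mp (hij.mono (inf_le (mem_univ i)) (inf_le (mem_univ j)))
  simp [excess, hinf]

lemma sum_le_card_sub_one_mul_add {ι : Type*} [Fintype ι] [DecidableEq ι] {f : ι → ℕ}
    {a b : ℕ} (i₀ : ι) (hi₀ : f i₀ ≤ b) (hf : ∀ i, i ≠ i₀ → f i ≤ a) :
    ∑ i, f i ≤ (Fintype.card ι - 1) * a + b := by
  rw [← add_sum_erase _ _ (mem_univ i₀), add_comm]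
  gcongr
  calc ∑ i ∈ univ.erase i₀, f i ≤ (univ.erase i₀).card • a :=
        sum_le_card_nsmul _ _ _ fun i hi => hf i (ne_of_mem_erase hi)
    _ = (Fintype.card ι - 1) * a := by simp [card_erase_of_mem]

lemma excess_update_const {A B : Finset α} (hAB : Disjoint A B) {i₀ i₁ : Fin s}
    (h : i₁ ≠ i₀) : excess (Function.update (fun _ => A) i₀ B) = (s - 1) * A.card + B.card := by
  rw [excess_eq_sum_of_disjoint (i := i₁) (j := i₀) (by simpa [h] using hAB),
    ← sum_erase_add _ _ (mem_univ i₀), sum_congr rfl fun i hi => by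
      rw [Function.update_of_ne (ne_of_mem_erase hi)]]
  simp [card_erase_of_mem]

lemma excess_le_of_mixed {KX KY : Finset (Finset α)}
    (hXY : ∀ A ∈ KX, ∀ B ∈ KY, Disjoint A B) (hd : KY.sup card ≤ KX.sup card)
    {J : Fin s → Finset α} (hJ : ∀ i, J i ∈ KX ∪ KY) {i₀ j₀ : Fin s}
    (hi₀ : J i₀ ∈ KY) (hj₀ : J j₀ ∈ KX) :
    excess J ≤ (s - 1) * KX.sup card + KY.sup card := by
  rw [excess_eq_sum_of_disjoint (hXY _ hj₀ _ hi₀)]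
  simpa using sum_le_card_sub_one_mul_add (f := fun i => (J i).card) i₀ (le_sup hi₀)
    fun i _ => (mem_union.1 (hJ i)).elim le_sup fun hY => (le_sup hY).trans hd

theorem csSup_excessSet_union {KX KY : Finset (Finset α)} (hs : 2 ≤ s)
    (hX : KX.Nonempty) (hY : KY.Nonempty) (hXY : ∀ A ∈ KX, ∀ B ∈ KY, Disjoint A B)
    (hd : KY.sup card ≤ KX.sup card) :
    sSup (excessSet s (KX ∪ KY)) = max (max (sSup (excessSet s KX)) (sSup (excessSet s KY)))
      ((s - 1) * KX.sup card + KY.sup card) := by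
  apply le_antisymm
  · refine csSup_le (excessSet_nonempty (hX.mono subset_union_left)) ?_
    rintro _ ⟨J, hJ, rfl⟩
    by_cases hallX : ∀ i, J i ∈ KX
    · exact le_max_of_le_left (le_max_of_le_left (excess_le_csSup hallX))
    by_cases hallY : ∀ i, J i ∈ KY
    · exact le_max_of_le_left (le_max_of_le_right (excess_le_csSup hallY))
    obtain ⟨i₀, hi₀⟩ := not_forall.1 hallX
    obtain ⟨j₀, hj₀⟩ := not_forall.1 hallY
    exact le_max_of_le_right (excess_le_of_mixed hXY hd hJ
      ((mem_union.1 (hJ i₀)).resolve_left hi₀) ((mem_union.1 (hJ j₀)).resolve_right hj₀))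
  · refine max_le (max_le (csSup_excessSet_mono hX subset_union_left)
      (csSup_excessSet_mono hY subset_union_right)) ?_
    obtain ⟨A, hA, hAmax⟩ := exists_mem_eq_sup KX hX card
    obtain ⟨B, hB, hBmax⟩ := exists_mem_eq_sup KY hY card
    let i₀ : Fin s := ⟨0, by omega⟩
    let i₁ : Fin s := ⟨1, by omega⟩
    have hmem : ∀ i, Function.update (fun _ => A) i₀ B i ∈ KX ∪ KY := fun i => by
      rcases eq_or_ne i i₀ with rfl | hi <;> simp [*]
    rw [hAmax, hBmax, ← excess_update_const (hXY A hA B hB) (i₀ := i₀) (i₁ := i₁)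
      (by simp [i₀, i₁, Fin.ext_iff])]
    exact excess_le_csSup hmem

end SimplicialExcess

theorem stmt_15_general (n m s : ℕ) (hs : 2 ≤ s) (KX KY : Finset (Finset (Fin (n + m + 1))))
    (hXne : KX.Nonempty) (hYne : KY.Nonempty)
    (hXv : ∀ A ∈ KX, ∀ v ∈ A, 1 ≤ v.val ∧ v.val ≤ n)
    (hYv : ∀ A ∈ KY, ∀ v ∈ A, n + 1 ≤ v.val ∧ v.val ≤ n + m)
    (dX dY : ℕ) (hdX : dX = KX.sup Finset.card) (hdY : dY = KY.sup Finset.card)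
    (hXY : dY ≤ dX) :
    sSup {k : ℕ | ∃ J : Fin s → Finset (Fin (n + m + 1)), (∀ i, J i ∈ KX ∪ KY) ∧
      k = (∑ i, (J i).card) - (Finset.univ.inf J).card} =
    max (max
      (sSup {k : ℕ | ∃ J : Fin s → Finset (Fin (n + m + 1)), (∀ i, J i ∈ KX) ∧
        k = (∑ i, (J i).card) - (Finset.univ.inf J).card})
      (sSup {k : ℕ | ∃ J : Fin s → Finset (Fin (n + m + 1)), (∀ i, J i ∈ KY) ∧
        k = (∑ i, (J i).card) - (Finset.univ.inf J).card}))
      ((s - 1) * dX + dY) := by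
  subst hdX hdY
  have hdisj : ∀ A ∈ KX, ∀ B ∈ KY, Disjoint A B := fun A hA B hB =>
    disjoint_left.2 fun v hvA hvB => by
      have := (hXv A hA v hvA).2
      have := (hYv B hB v hvB).1
      omega
  exact SimplicialExcess.csSup_excessSet_union hs hXne hYne hdisj hXY

/-- For `K = K_X ⊔ K_Y` the disjoint union of simplicial complexes on disjoint vertex sets
`[n]` and `{n+1, ..., n+m}`, with `d_X = 1 + dim K_X ≥ d_Y = 1 + dim K_Y`:
`N^s(K) = max{N^s(K_X), N^s(K_Y), (s−1)·d_X + d_Y}`. -/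
theorem stmt_15 (n m s : ℕ) (hs : 2 ≤ s) (KX KY : Finset (Finset (Fin (n + m + 1))))
    (hXne : KX.Nonempty) (hYne : KY.Nonempty)
    (hXdc : ∀ A ∈ KX, ∀ B ⊆ A, B ∈ KX) (hYdc : ∀ A ∈ KY, ∀ B ⊆ A, B ∈ KY)
    (hXv : ∀ A ∈ KX, ∀ v ∈ A, 1 ≤ v.val ∧ v.val ≤ n)
    (hYv : ∀ A ∈ KY, ∀ v ∈ A, n + 1 ≤ v.val ∧ v.val ≤ n + m)
    (dX dY : ℕ) (hdX : dX = KX.sup Finset.card) (hdY : dY = KY.sup Finset.card)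
    (hXY : dY ≤ dX) :
    sSup {k : ℕ | ∃ J : Fin s → Finset (Fin (n + m + 1)), (∀ i, J i ∈ KX ∪ KY) ∧
      k = (∑ i, (J i).card) - (Finset.univ.inf J).card} =
    max (max
      (sSup {k : ℕ | ∃ J : Fin s → Finset (Fin (n + m + 1)), (∀ i, J i ∈ KX) ∧
        k = (∑ i, (J i).card) - (Finset.univ.inf J).card})
      (sSup {k : ℕ | ∃ J : Fin s → Finset (Fin (n + m + 1)), (∀ i, J i ∈ KY) ∧
        k = (∑ i, (J i).card) - (Finset.univ.inf J).card}))
      ((s - 1) * dX + dY) :=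
  stmt_15_general n m s hs KX KY hXne hYne hXv hYv dX dY hdX hdY hXY
end

section
/- In the exterior algebra E = Λ_ℚ(ε_1, ..., ε_n) with all generators of odd degree, consider the s-fold tensor power E^{⊗s}. For u ∈ E and 2 ≤ ℓ ≤ s let u(ℓ) = u⊗1⊗···⊗1 − 1⊗···⊗u⊗···⊗1 (u in position ℓ). For subsets J_1, ..., J_s ⊆ [n], the product ∏_{ℓ=2}^{s} ∏_{j ∈ ((⋂_{m<ℓ} J_m) \ J_ℓ) ∪ J_ℓ} ε_j(ℓ) is nonzero in E^{⊗s}: its expansion contains, with coefficient ±1, the basis element ε_{J_0} ⊗ ε_{J_2} ⊗ ··· ⊗ ε_{J_s} where J_0 = J_1 \ ⋂_{ℓ=1}^{s} J_ℓ. -/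
open scoped TensorProduct

/-- The exterior algebra `E = Λ_ℚ(ε_1, ..., ε_n)` (all generators in odd degree). -/
abbrev ExtAlg (n : ℕ) := ExteriorAlgebra ℚ (Fin n → ℚ)

/-- The generator `ε_j` of `E`. -/
noncomputable def extGen (n : ℕ) (j : Fin n) : ExtAlg n :=
  ExteriorAlgebra.ι ℚ (Pi.single j 1)

/-- The basis monomial `ε_A = ∏_{j ∈ A} ε_j` (factors in increasing order). -/
noncomputable def extMono (n : ℕ) (A : Finset (Fin n)) : ExtAlg n :=
  ((A.sort (· ≤ ·)).map (extGen n)).prod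

/-- The basis element `ε_{A 0} ⊗ ε_{A 1} ⊗ ··· ⊗ ε_{A (s-1)}` of `E^{⊗s}`. -/
noncomputable def tensorMono (n s : ℕ) (A : Fin s → Finset (Fin n)) :
    ⨂[ℚ] (_ : Fin s), ExtAlg n :=
  PiTensorProduct.tprod ℚ (fun i => extMono n (A i))

/-- The zero-divisor `u(ℓ) = u ⊗ 1 ⊗ ··· ⊗ 1 − 1 ⊗ ··· ⊗ u ⊗ ··· ⊗ 1` (`u = ε_j` in
position `ℓ`; positions `0`-based, the first tensor slot being position `0`). -/
noncomputable def genAt (n s : ℕ) [NeZero s] (j : Fin n) (ℓ : Fin s) :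
    ⨂[ℚ] (_ : Fin s), ExtAlg n :=
  PiTensorProduct.tprod ℚ (Function.update (fun _ => (1 : ExtAlg n)) 0 (extGen n j)) -
    PiTensorProduct.tprod ℚ (Function.update (fun _ => (1 : ExtAlg n)) ℓ (extGen n j))

/-- The product `∏_{ℓ=2}^{s} ∏_{j ∈ ((⋂_{m<ℓ} J_m) \ J_ℓ) ∪ J_ℓ} ε_j(ℓ)` (indices
`0`-based: `ℓ` runs over the nonzero positions, in increasing order, and within each `ℓ`
the factors `ε_j(ℓ)` are taken with `j` increasing). -/
noncomputable def zdProduct (n s : ℕ) [NeZero s] (J : Fin s → Finset (Fin n)) :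
    ⨂[ℚ] (_ : Fin s), ExtAlg n :=
  (((List.finRange s).filter (fun ℓ => ℓ ≠ 0)).map (fun ℓ =>
    ((((Finset.univ.filter (fun m => m < ℓ)).inf J \ J ℓ) ∪ J ℓ).sort (· ≤ ·) |>.map
      (fun j => genAt n s j ℓ)).prod)).prod

set_option maxHeartbeats 1000000
set_option synthInstance.maxHeartbeats 400000

namespace Stmt16

variable {n : ℕ}

lemma extGen_swap (a b : Fin n) : extGen n a * extGen n b = -(extGen n b * extGen n a) :=
  eq_neg_of_add_eq_zero_left (ExteriorAlgebra.ι_add_mul_swap _ _)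

lemma extMono_empty : extMono n ∅ = 1 := by
  simp [extMono, Finset.sort_empty]

lemma extMono_cons {a : Fin n} {B : Finset (Fin n)} (h : ∀ b ∈ B, a ≤ b) (ha : a ∉ B) :
    extMono n (insert a B) = extGen n a * extMono n B := by
  unfold extMono
  rw [Finset.sort_insert _ h ha, List.map_cons, List.prod_cons]

lemma prodList_mul_gen (l : List (Fin n)) (j : Fin n) :
    (l.map (extGen n)).prod * extGen n j
      = ((-1 : ℚ) ^ l.length) • (extGen n j * (l.map (extGen n)).prod) := by
  induction l with
  | nil => simp
  | cons a t ih =>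
    simp only [List.map_cons, List.prod_cons, List.length_cons]
    rw [mul_assoc, ih, mul_smul_comm, ← mul_assoc, extGen_swap a j, neg_mul, mul_assoc,
      pow_succ, mul_smul, neg_one_smul]

lemma gen_mul_mono : ∀ (k : ℕ) (B : Finset (Fin n)), B.card = k → ∀ j : Fin n,
    (j ∈ B → extGen n j * extMono n B = 0) ∧
    (j ∉ B → ∃ σ : ℚ, (σ = 1 ∨ σ = -1) ∧
      extGen n j * extMono n B = σ • extMono n (insert j B)) := by
  intro k
  induction k with
  | zero =>
    intro B hB j
    rw [Finset.card_eq_zero] at hB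
    subst hB
    refine ⟨by simp, fun _ => ⟨1, Or.inl rfl, ?_⟩⟩
    rw [extMono_empty, one_smul, mul_one]
    have h1 : insert j (∅ : Finset (Fin n)) = {j} := by simp
    rw [h1]
    simp [extMono, Finset.sort_singleton]
  | succ k ih =>
    intro B hB j
    have hne : B.Nonempty := Finset.card_pos.mp (by omega)
    set a := B.min' hne with ha
    have haB : a ∈ B := B.min'_mem hne
    have herase : B = insert a (B.erase a) := (Finset.insert_erase haB).symm
    have hcard : (B.erase a).card = k := by
      rw [Finset.card_erase_of_mem haB, hB]
      omega
    have hle : ∀ b ∈ B.erase a, a ≤ b := fun b hb =>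
      B.min'_le b (Finset.mem_of_mem_erase hb)
    have hmono : extMono n B = extGen n a * extMono n (B.erase a) := by
      conv_lhs => rw [herase]
      exact extMono_cons hle (Finset.notMem_erase a B)
    constructor
    · intro hj
      by_cases hja : j = a
      · rw [hmono, ← mul_assoc, hja]
        have hz : extGen n a * extGen n a = 0 := ExteriorAlgebra.ι_sq_zero _
        rw [hz, zero_mul]
      · have hj' : j ∈ B.erase a := Finset.mem_erase.mpr ⟨hja, hj⟩
        rw [hmono, ← mul_assoc, extGen_swap j a, neg_mul, mul_assoc,
          (ih (B.erase a) hcard j).1 hj', mul_zero, neg_zero]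
    · intro hj
      have hja : j ≠ a := fun h => hj (h ▸ haB)
      rcases lt_or_gt_of_ne hja with hlt | hgt
      · exact ⟨1, Or.inl rfl, by
          rw [one_smul, extMono_cons (fun b hb => (le_of_lt (lt_of_lt_of_le hlt (B.min'_le b hb)))) hj]⟩
      · -- j > a
        have hj' : j ∉ B.erase a := fun h => hj (Finset.mem_of_mem_erase h)
        obtain ⟨σ, hσ, heq⟩ := (ih (B.erase a) hcard j).2 hj'
        refine ⟨-σ, by rcases hσ with h | h <;> simp [h], ?_⟩
        rw [hmono, ← mul_assoc, extGen_swap j a, neg_mul, mul_assoc, heq, mul_smul_comm]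
        have hins : extMono n (insert a (insert j (B.erase a))) =
            extGen n a * extMono n (insert j (B.erase a)) := by
          apply extMono_cons
          · intro b hb
            rcases Finset.mem_insert.mp hb with rfl | hb'
            · exact le_of_lt hgt
            · exact hle b hb'
          · intro h
            rcases Finset.mem_insert.mp h with h' | h'
            · exact hja h'.symm
            · exact Finset.notMem_erase a B h'
        have hset : insert j B = insert a (insert j (B.erase a)) := by
          rw [Finset.insert_comm, ← herase]
        rw [hset, hins, neg_smul]

lemma pm_mul {a b : ℚ} (ha : a = 1 ∨ a = -1) (hb : b = 1 ∨ b = -1) :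
    a * b = 1 ∨ a * b = -1 := by
  rcases ha with h | h <;> rcases hb with h' | h' <;> subst h <;> subst h' <;> norm_num

lemma pm_pow (k : ℕ) : ((-1 : ℚ)) ^ k = 1 ∨ ((-1 : ℚ)) ^ k = -1 := by
  rcases Nat.even_or_odd k with h | h
  · exact Or.inl (Even.neg_one_pow h)
  · exact Or.inr (Odd.neg_one_pow h)

lemma mono_mul_gen_cases (B : Finset (Fin n)) (j : Fin n) :
    ∃ c : ℚ, extMono n B * extGen n j = c • extMono n (insert j B) ∧
      (j ∉ B → c = 1 ∨ c = -1) := by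
  have h3 := prodList_mul_gen (B.sort (· ≤ ·)) j
  by_cases hj : j ∈ B
  · refine ⟨0, ?_, fun h => absurd hj h⟩
    rw [zero_smul]
    have hz := (gen_mul_mono B.card B rfl j).1 hj
    show ((B.sort (· ≤ ·)).map (extGen n)).prod * extGen n j = 0
    rw [h3]
    show _ • (extGen n j * extMono n B) = 0
    rw [hz, smul_zero]
  · obtain ⟨σ, hσ, heq⟩ := (gen_mul_mono B.card B rfl j).2 hj
    refine ⟨(-1) ^ B.card * σ, ?_, fun _ => pm_mul (pm_pow B.card) hσ⟩
    show ((B.sort (· ≤ ·)).map (extGen n)).prod * extGen n j = _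
    rw [h3, Finset.length_sort]
    show _ • (extGen n j * extMono n B) = _
    rw [heq, smul_smul]


section Tensor

variable {s : ℕ} [NeZero s]

lemma tensor_mul_slot (A : Fin s → Finset (Fin n)) (j : Fin n) (p : Fin s) :
    ∃ c : ℚ, tensorMono n s A *
        PiTensorProduct.tprod ℚ (Function.update (fun _ => (1 : ExtAlg n)) p (extGen n j)) =
      c • tensorMono n s (Function.update A p (insert j (A p))) ∧
      (j ∉ A p → c = 1 ∨ c = -1) := by
  obtain ⟨c, hc, hpm⟩ := mono_mul_gen_cases (A p) j
  refine ⟨c, ?_, hpm⟩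
  unfold tensorMono
  rw [PiTensorProduct.tprod_mul_tprod]
  have h1 : (fun i => extMono n (A i)) * (Function.update (fun _ => (1 : ExtAlg n)) p (extGen n j))
      = Function.update (fun i => extMono n (A i)) p (extMono n (A p) * extGen n j) := by
    funext i
    by_cases h : i = p
    · subst h; simp
    · simp [Function.update_of_ne h]
  rw [h1, hc, MultilinearMap.map_update_smul]
  congr 1
  congr 1
  funext i
  rw [Function.update_apply, Function.update_apply, apply_ite (extMono n)]

variable (J : Fin s → Finset (Fin n))

def Dead (Proc A : Fin s → Finset (Fin n)) : Prop :=
  ∃ ℓ : Fin s, ℓ ≠ 0 ∧ A ℓ ∩ Proc ℓ ≠ J ℓ ∩ Proc ℓ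

noncomputable def deadSpan (Proc : Fin s → Finset (Fin n)) :
    Submodule ℚ (⨂[ℚ] (_ : Fin s), ExtAlg n) :=
  Submodule.span ℚ {x | ∃ A, Dead J Proc A ∧ x = tensorMono n s A}

lemma Dead.mono {Proc Proc' A : Fin s → Finset (Fin n)}
    (h : ∀ ℓ, Proc ℓ ⊆ Proc' ℓ) (hd : Dead J Proc A) : Dead J Proc' A := by
  obtain ⟨ℓ, hℓ, hne⟩ := hd
  refine ⟨ℓ, hℓ, fun hEq => hne ?_⟩
  ext x
  have hx := Finset.ext_iff.mp hEq x
  simp only [Finset.mem_inter] at *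
  constructor
  · rintro ⟨h1, h2⟩; exact ⟨(hx.mp ⟨h1, h ℓ h2⟩).1, h2⟩
  · rintro ⟨h1, h2⟩; exact ⟨(hx.mpr ⟨h1, h ℓ h2⟩).1, h2⟩

lemma deadSpan_mono {Proc Proc' : Fin s → Finset (Fin n)}
    (h : ∀ ℓ, Proc ℓ ⊆ Proc' ℓ) : deadSpan J Proc ≤ deadSpan J Proc' := by
  apply Submodule.span_mono
  rintro x ⟨A, hd, rfl⟩
  exact ⟨A, hd.mono J h, rfl⟩

lemma mul_genAt_mem_deadSpan {Proc : Fin s → Finset (Fin n)} {r} (hr : r ∈ deadSpan J Proc)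
    {j : Fin n} {ℓ : Fin s} (hℓ : ℓ ≠ 0) (hj : j ∉ Proc ℓ) :
    r * genAt n s j ℓ ∈ deadSpan J (Function.update Proc ℓ (insert j (Proc ℓ))) := by
  have hmono : ∀ m, Proc m ⊆ Function.update Proc ℓ (insert j (Proc ℓ)) m := by
    intro m
    rcases eq_or_ne m ℓ with rfl | h
    · rw [Function.update_self]; exact Finset.subset_insert _ _
    · rw [Function.update_of_ne h]
  induction hr using Submodule.span_induction with
  | mem x hx =>
    obtain ⟨A, hd, rfl⟩ := hx
    have hXY : tensorMono n s A * genAt n s j ℓ =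
        tensorMono n s A *
          PiTensorProduct.tprod ℚ (Function.update (fun _ => (1 : ExtAlg n)) 0 (extGen n j)) -
        tensorMono n s A *
          PiTensorProduct.tprod ℚ (Function.update (fun _ => (1 : ExtAlg n)) ℓ (extGen n j)) := by
      rw [genAt, mul_sub]
    obtain ⟨c₁, hc₁, -⟩ := tensor_mul_slot A j (0 : Fin s)
    obtain ⟨c₂, hc₂, -⟩ := tensor_mul_slot A j ℓ
    rw [hXY, hc₁, hc₂]
    have hd₁ : Dead J (Function.update Proc ℓ (insert j (Proc ℓ)))
        (Function.update A 0 (insert j (A 0))) := by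
      refine Dead.mono J hmono ?_
      obtain ⟨ℓ₀, hℓ₀, hne⟩ := hd
      exact ⟨ℓ₀, hℓ₀, by rwa [Function.update_of_ne hℓ₀]⟩
    have hd₂ : Dead J (Function.update Proc ℓ (insert j (Proc ℓ)))
        (Function.update A ℓ (insert j (A ℓ))) := by
      refine Dead.mono J hmono ?_
      obtain ⟨ℓ₀, hℓ₀, hne⟩ := hd
      rcases eq_or_ne ℓ₀ ℓ with rfl | h
      · refine ⟨ℓ₀, hℓ₀, ?_⟩
        rw [Function.update_self, Finset.insert_inter_of_notMem hj]
        exact hne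
      · exact ⟨ℓ₀, hℓ₀, by rwa [Function.update_of_ne h]⟩
    exact sub_mem (Submodule.smul_mem _ _ (Submodule.subset_span ⟨_, hd₁, rfl⟩))
      (Submodule.smul_mem _ _ (Submodule.subset_span ⟨_, hd₂, rfl⟩))
  | zero => rw [zero_mul]; exact Submodule.zero_mem _
  | add x y _ _ hx hy => rw [add_mul]; exact Submodule.add_mem _ hx hy
  | smul c x _ hx => rw [smul_mul_assoc]; exact Submodule.smul_mem _ _ hx


lemma pm_neg {a : ℚ} (ha : a = 1 ∨ a = -1) : -a = 1 ∨ -a = -1 := by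
  rcases ha with h | h <;> subst h <;> norm_num

lemma inner_step (ℓ : Fin s) (hℓ : ℓ ≠ 0) :
    ∀ (l : List (Fin n)) (Proc A : Fin s → Finset (Fin n)) (σ : ℚ)
      (r : ⨂[ℚ] (_ : Fin s), ExtAlg n),
      (σ = 1 ∨ σ = -1) → l.Nodup →
      (∀ x ∈ l, x ∉ Proc ℓ) → (∀ x ∈ l, x ∉ A ℓ) → (∀ x ∈ l, x ∉ J ℓ → x ∉ A 0) →
      r ∈ deadSpan J Proc →
      ∃ (σ' : ℚ) (r' : ⨂[ℚ] (_ : Fin s), ExtAlg n), (σ' = 1 ∨ σ' = -1) ∧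
        r' ∈ deadSpan J (Function.update Proc ℓ (Proc ℓ ∪ l.toFinset)) ∧
        (σ • tensorMono n s A + r) * (l.map (fun j => genAt n s j ℓ)).prod =
          σ' • tensorMono n s
            (Function.update (Function.update A ℓ (A ℓ ∪ (l.toFinset ∩ J ℓ))) 0
              (A 0 ∪ (l.toFinset \ J ℓ))) + r' := by
  intro l
  induction l with
  | nil =>
    intro Proc A σ r hσ _ _ _ _ hr
    refine ⟨σ, r, hσ, ?_, ?_⟩
    · simpa [Function.update_eq_self] using hr
    · simp [Function.update_eq_self]
  | cons j t ih =>
    intro Proc A σ r hσ hnd hpr hAl hA0 hr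
    have hjt : j ∉ t := (List.nodup_cons.mp hnd).1
    have hndt : t.Nodup := (List.nodup_cons.mp hnd).2
    have hjP : j ∉ Proc ℓ := hpr j (List.mem_cons_self (a := j) (l := t))
    have hjA : j ∉ A ℓ := hAl j (List.mem_cons_self (a := j) (l := t))
    set Proc' := Function.update Proc ℓ (insert j (Proc ℓ)) with hProc'
    obtain ⟨c₁, hc₁, hc₁pm⟩ := tensor_mul_slot A j (0 : Fin s)
    obtain ⟨c₂, hc₂, hc₂pm⟩ := tensor_mul_slot A j ℓ
    have hMAgen : tensorMono n s A * genAt n s j ℓ =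
        c₁ • tensorMono n s (Function.update A 0 (insert j (A 0))) -
        c₂ • tensorMono n s (Function.update A ℓ (insert j (A ℓ))) := by
      rw [genAt, mul_sub, hc₁, hc₂]
    have hrg : r * genAt n s j ℓ ∈ deadSpan J Proc' :=
      mul_genAt_mem_deadSpan J hr hℓ hjP
    have hProcEq : Function.update Proc' ℓ (Proc' ℓ ∪ t.toFinset) =
        Function.update Proc ℓ (Proc ℓ ∪ (j :: t).toFinset) := by
      rw [hProc', Function.update_idem]
      congr 1
      rw [Function.update_self, List.toFinset_cons, Finset.insert_union,
        Finset.union_insert]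
    by_cases hjJ : j ∈ J ℓ
    · -- track goes to slot ℓ
      set A₂ := Function.update A ℓ (insert j (A ℓ)) with hA₂
      have hd₁ : Dead J Proc' (Function.update A 0 (insert j (A 0))) := by
        refine ⟨ℓ, hℓ, fun hEq => ?_⟩
        have hjmem : j ∈ J ℓ ∩ Proc' ℓ := by
          rw [hProc', Function.update_self]
          exact Finset.mem_inter.mpr ⟨hjJ, Finset.mem_insert_self _ _⟩
        rw [← hEq] at hjmem
        have : j ∈ Function.update A 0 (insert j (A 0)) ℓ := (Finset.mem_inter.mp hjmem).1
        rw [Function.update_of_ne hℓ] at this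
        exact hjA this
      have hnewr : (σ * c₁) • tensorMono n s (Function.update A 0 (insert j (A 0))) +
          r * genAt n s j ℓ ∈ deadSpan J Proc' :=
        Submodule.add_mem _ (Submodule.smul_mem _ _ (Submodule.subset_span ⟨_, hd₁, rfl⟩)) hrg
      obtain ⟨σ', r', hσ', hr', heq⟩ := ih Proc' A₂ (-(σ * c₂))
        ((σ * c₁) • tensorMono n s (Function.update A 0 (insert j (A 0))) + r * genAt n s j ℓ)
        (pm_neg (pm_mul hσ (hc₂pm hjA))) hndt
        (by intro x hx
            rw [hProc', Function.update_self]
            intro hmem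
            rcases Finset.mem_insert.mp hmem with rfl | h
            · exact hjt hx
            · exact hpr x (List.mem_cons_of_mem j hx) h)
        (by intro x hx
            rw [hA₂, Function.update_self]
            intro hmem
            rcases Finset.mem_insert.mp hmem with rfl | h
            · exact hjt hx
            · exact hAl x (List.mem_cons_of_mem j hx) h)
        (by intro x hx hxJ
            rw [hA₂, Function.update_of_ne (Ne.symm hℓ)]
            exact hA0 x (List.mem_cons_of_mem j hx) hxJ)
        hnewr
      refine ⟨σ', r', hσ', ?_, ?_⟩
      · rwa [hProcEq] at hr'
      · rw [List.map_cons, List.prod_cons, ← mul_assoc]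
        have hstep : (σ • tensorMono n s A + r) * genAt n s j ℓ =
            (-(σ * c₂)) • tensorMono n s A₂ +
            ((σ * c₁) • tensorMono n s (Function.update A 0 (insert j (A 0))) +
              r * genAt n s j ℓ) := by
          rw [add_mul, smul_mul_assoc, hMAgen]
          module
        have hAeq : (Function.update (Function.update A₂ ℓ (A₂ ℓ ∪ t.toFinset ∩ J ℓ)) 0
              (A₂ 0 ∪ t.toFinset \ J ℓ)) =
            (Function.update (Function.update A ℓ (A ℓ ∪ (j :: t).toFinset ∩ J ℓ)) 0
              (A 0 ∪ (j :: t).toFinset \ J ℓ)) := by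
          funext m
          rcases eq_or_ne m 0 with rfl | hm0
          · rw [Function.update_self, Function.update_self, hA₂,
              Function.update_of_ne (Ne.symm hℓ), List.toFinset_cons,
              Finset.insert_sdiff_of_mem _ hjJ]
          · rw [Function.update_of_ne hm0, Function.update_of_ne hm0]
            rcases eq_or_ne m ℓ with rfl | hmℓ
            · rw [Function.update_self, Function.update_self, hA₂, Function.update_self,
                List.toFinset_cons, Finset.insert_inter_of_mem hjJ, Finset.insert_union,
                Finset.union_insert]
            · rw [Function.update_of_ne hmℓ, Function.update_of_ne hmℓ, hA₂,
                Function.update_of_ne hmℓ]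
        rw [hstep, heq, hAeq]
    · -- track goes to slot 0
      set A₁ := Function.update A 0 (insert j (A 0)) with hA₁
      have hjA0 : j ∉ A 0 := hA0 j (List.mem_cons_self (a := j) (l := t)) hjJ
      have hd₂ : Dead J Proc' (Function.update A ℓ (insert j (A ℓ))) := by
        refine ⟨ℓ, hℓ, fun hEq => ?_⟩
        have hjmem : j ∈ Function.update A ℓ (insert j (A ℓ)) ℓ ∩ Proc' ℓ := by
          rw [hProc', Function.update_self, Function.update_self]
          exact Finset.mem_inter.mpr ⟨Finset.mem_insert_self _ _, Finset.mem_insert_self _ _⟩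
        rw [hEq] at hjmem
        exact hjJ (Finset.mem_inter.mp hjmem).1
      have hnewr : (-(σ * c₂)) • tensorMono n s (Function.update A ℓ (insert j (A ℓ))) +
          r * genAt n s j ℓ ∈ deadSpan J Proc' :=
        Submodule.add_mem _ (Submodule.smul_mem _ _ (Submodule.subset_span ⟨_, hd₂, rfl⟩)) hrg
      obtain ⟨σ', r', hσ', hr', heq⟩ := ih Proc' A₁ (σ * c₁)
        ((-(σ * c₂)) • tensorMono n s (Function.update A ℓ (insert j (A ℓ))) + r * genAt n s j ℓ)
        (pm_mul hσ (hc₁pm hjA0)) hndt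
        (by intro x hx
            rw [hProc', Function.update_self]
            intro hmem
            rcases Finset.mem_insert.mp hmem with rfl | h
            · exact hjt hx
            · exact hpr x (List.mem_cons_of_mem j hx) h)
        (by intro x hx
            rw [hA₁, Function.update_of_ne hℓ]
            exact hAl x (List.mem_cons_of_mem j hx))
        (by intro x hx hxJ
            rw [hA₁, Function.update_self]
            intro hmem
            rcases Finset.mem_insert.mp hmem with rfl | h
            · exact hjt hx
            · exact hA0 x (List.mem_cons_of_mem j hx) hxJ h)
        hnewr
      refine ⟨σ', r', hσ', ?_, ?_⟩
      · rwa [hProcEq] at hr'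
      · rw [List.map_cons, List.prod_cons, ← mul_assoc]
        have hstep : (σ • tensorMono n s A + r) * genAt n s j ℓ =
            (σ * c₁) • tensorMono n s A₁ +
            ((-(σ * c₂)) • tensorMono n s (Function.update A ℓ (insert j (A ℓ))) +
              r * genAt n s j ℓ) := by
          rw [add_mul, smul_mul_assoc, hMAgen]
          module
        have hAeq : (Function.update (Function.update A₁ ℓ (A₁ ℓ ∪ t.toFinset ∩ J ℓ)) 0
              (A₁ 0 ∪ t.toFinset \ J ℓ)) =
            (Function.update (Function.update A ℓ (A ℓ ∪ (j :: t).toFinset ∩ J ℓ)) 0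
              (A 0 ∪ (j :: t).toFinset \ J ℓ)) := by
          funext m
          rcases eq_or_ne m 0 with rfl | hm0
          · rw [Function.update_self, Function.update_self, hA₁, Function.update_self,
              List.toFinset_cons, Finset.insert_sdiff_of_notMem _ hjJ, Finset.insert_union,
              Finset.union_insert]
          · rw [Function.update_of_ne hm0, Function.update_of_ne hm0]
            rcases eq_or_ne m ℓ with rfl | hmℓ
            · rw [Function.update_self, Function.update_self, hA₁,
                Function.update_of_ne hℓ, List.toFinset_cons,
                Finset.insert_inter_of_notMem hjJ]
            · rw [Function.update_of_ne hmℓ, Function.update_of_ne hmℓ, hA₁,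
                Function.update_of_ne hm0]
        rw [hstep, heq, hAeq]


def Sset (ℓ : Fin s) : Finset (Fin n) :=
  ((Finset.univ.filter (fun m => m < ℓ)).inf J \ J ℓ) ∪ J ℓ

noncomputable def procOf (Done : Finset (Fin s)) : Fin s → Finset (Fin n) :=
  fun i => if i ∈ Done then Sset J i else ∅

noncomputable def stateOf (Done : Finset (Fin s)) : Fin s → Finset (Fin n) :=
  fun i => if i = 0 then Done.biUnion (fun m => Sset J m \ J m)
    else if i ∈ Done then J i else ∅

lemma mem_finset_inf {ι : Type*} {t : Finset ι} {f : ι → Finset (Fin n)} {a : Fin n} :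
    a ∈ t.inf f ↔ ∀ i ∈ t, a ∈ f i := by
  induction t using Finset.cons_induction <;> simp [*]

lemma mem_Sset_sdiff {ℓ : Fin s} {x : Fin n} (hx : x ∈ Sset J ℓ) (hxJ : x ∉ J ℓ) :
    ∀ m, m ≠ ℓ → x ∉ Sset J m \ J m := by
  intro m hm hmem
  have hxI : x ∈ (Finset.univ.filter (fun m' => m' < ℓ)).inf J := by
    rcases Finset.mem_union.mp hx with h | h
    · exact (Finset.mem_sdiff.mp h).1
    · exact absurd h hxJ
  have hmem' := Finset.mem_sdiff.mp hmem
  have hxIm : x ∈ (Finset.univ.filter (fun m' => m' < m)).inf J := by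
    rcases Finset.mem_union.mp hmem'.1 with h | h
    · exact (Finset.mem_sdiff.mp h).1
    · exact absurd h hmem'.2
  rcases lt_or_gt_of_ne hm with hlt | hgt
  · -- m < ℓ : x ∈ J m from hxI, contradiction with hmem'.2
    exact hmem'.2 (mem_finset_inf.mp hxI m (Finset.mem_filter.mpr ⟨Finset.mem_univ _, hlt⟩))
  · -- ℓ < m : x ∈ J ℓ from hxIm, contradiction with hxJ
    exact hxJ (mem_finset_inf.mp hxIm ℓ (Finset.mem_filter.mpr ⟨Finset.mem_univ _, hgt⟩))

lemma outer_step :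
    ∀ (Ls : List (Fin s)) (Done : Finset (Fin s)) (σ : ℚ)
      (r : ⨂[ℚ] (_ : Fin s), ExtAlg n),
      (σ = 1 ∨ σ = -1) → Ls.Nodup → (∀ ℓ ∈ Ls, ℓ ≠ 0) → (0 : Fin s) ∉ Done →
      (∀ ℓ ∈ Ls, ℓ ∉ Done) → r ∈ deadSpan J (procOf J Done) →
      ∃ (σ' : ℚ) (r' : ⨂[ℚ] (_ : Fin s), ExtAlg n), (σ' = 1 ∨ σ' = -1) ∧
        r' ∈ deadSpan J (procOf J (Done ∪ Ls.toFinset)) ∧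
        (σ • tensorMono n s (stateOf J Done) + r) *
          (Ls.map (fun ℓ =>
            ((Sset J ℓ).sort (· ≤ ·) |>.map (fun j => genAt n s j ℓ)).prod)).prod =
          σ' • tensorMono n s (stateOf J (Done ∪ Ls.toFinset)) + r' := by
  intro Ls
  induction Ls with
  | nil =>
    intro Done σ r hσ _ _ _ _ hr
    exact ⟨σ, r, hσ, by simpa using hr, by simp⟩
  | cons ℓ rest ih =>
    intro Done σ r hσ hnd hne h0D hdisj hr
    have hℓ0 : ℓ ≠ 0 := hne ℓ (List.mem_cons_self (a := ℓ) (l := rest))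
    have hℓD : ℓ ∉ Done := hdisj ℓ (List.mem_cons_self (a := ℓ) (l := rest))
    obtain ⟨σ₁, r₁, hσ₁, hr₁, heq₁⟩ := inner_step J ℓ hℓ0 ((Sset J ℓ).sort (· ≤ ·))
      (procOf J Done) (stateOf J Done) σ r hσ (Finset.sort_nodup _ _)
      (by intro x _
          show x ∉ procOf J Done ℓ
          rw [procOf, if_neg hℓD]
          exact Finset.notMem_empty x)
      (by intro x _
          show x ∉ stateOf J Done ℓ
          rw [stateOf]
          simp only [if_neg hℓ0, if_neg hℓD]
          exact Finset.notMem_empty x)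
      (by intro x hx hxJ
          have hxS : x ∈ Sset J ℓ := (Finset.mem_sort _).mp hx
          show x ∉ stateOf J Done 0
          rw [stateOf, if_pos rfl]
          intro hmem
          obtain ⟨m, hmD, hmx⟩ := Finset.mem_biUnion.mp hmem
          exact mem_Sset_sdiff J hxS hxJ m (fun h => hℓD (h ▸ hmD)) hmx)
      hr
    have hProcEq : Function.update (procOf J Done) ℓ
        (procOf J Done ℓ ∪ ((Sset J ℓ).sort (· ≤ ·)).toFinset) = procOf J (insert ℓ Done) := by
      funext m
      rcases eq_or_ne m ℓ with rfl | hm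
      · rw [Function.update_self, procOf, procOf, if_neg hℓD, if_pos (Finset.mem_insert_self _ _),
          Finset.sort_toFinset, Finset.empty_union]
      · rw [Function.update_of_ne hm, procOf, procOf]
        rcases eq_or_ne ℓ m with rfl | hm2
        · exact absurd rfl hm
        · by_cases hmD : m ∈ Done
          · rw [if_pos hmD, if_pos (Finset.mem_insert_of_mem hmD)]
          · rw [if_neg hmD, if_neg (by
              intro h
              rcases Finset.mem_insert.mp h with h' | h'
              · exact hm h'
              · exact hmD h')]
    have hStateEq : Function.update (Function.update (stateOf J Done) ℓ
          (stateOf J Done ℓ ∪ (((Sset J ℓ).sort (· ≤ ·)).toFinset ∩ J ℓ))) 0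
          (stateOf J Done 0 ∪ (((Sset J ℓ).sort (· ≤ ·)).toFinset \ J ℓ)) =
        stateOf J (insert ℓ Done) := by
      funext m
      rcases eq_or_ne m 0 with rfl | hm0
      · rw [Function.update_self, stateOf, stateOf, if_pos rfl, if_pos rfl,
          Finset.sort_toFinset, Finset.biUnion_insert, Finset.union_comm]
      · rw [Function.update_of_ne hm0]
        rcases eq_or_ne m ℓ with rfl | hmℓ
        · rw [Function.update_self, stateOf, stateOf, if_neg hm0, if_neg hm0, if_neg hℓD,
            if_pos (Finset.mem_insert_self _ _), Finset.sort_toFinset, Finset.empty_union]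
          exact Finset.union_inter_cancel_right
        · rw [Function.update_of_ne hmℓ, stateOf, stateOf, if_neg hm0, if_neg hm0]
          by_cases hmD : m ∈ Done
          · rw [if_pos hmD, if_pos (Finset.mem_insert_of_mem hmD)]
          · rw [if_neg hmD, if_neg (by
              intro h
              rcases Finset.mem_insert.mp h with h' | h'
              · exact hmℓ h'
              · exact hmD h')]
    rw [hProcEq] at hr₁
    rw [hStateEq] at heq₁
    obtain ⟨σ', r', hσ', hr', heq⟩ := ih (insert ℓ Done) σ₁ r₁ hσ₁
      (List.nodup_cons.mp hnd).2
      (fun m hm => hne m (List.mem_cons_of_mem ℓ hm))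
      (by intro h
          rcases Finset.mem_insert.mp h with h' | h'
          · exact hℓ0 h'.symm
          · exact h0D h')
      (by intro m hm h
          rcases Finset.mem_insert.mp h with h' | h'
          · exact (List.nodup_cons.mp hnd).1 (h' ▸ hm)
          · exact hdisj m (List.mem_cons_of_mem ℓ hm) h')
      hr₁
    have hDoneEq : insert ℓ Done ∪ rest.toFinset = Done ∪ (ℓ :: rest).toFinset := by
      rw [List.toFinset_cons, Finset.insert_union, Finset.union_insert]
    rw [hDoneEq] at hr' heq
    refine ⟨σ', r', hσ', hr', ?_⟩
    rw [List.map_cons, List.prod_cons, ← mul_assoc, heq₁, heq]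

end Tensor


section Dual





lemma extMono_eq_iotaMulti (B : Finset (Fin n)) :
    extMono n B = ExteriorAlgebra.ιMulti ℚ (B.sort (· ≤ ·)).length
      (fun i => Pi.single ((B.sort (· ≤ ·)).get i) (1 : ℚ)) := by
  rw [ExteriorAlgebra.ιMulti_apply]
  unfold extMono extGen
  conv_lhs => rw [← List.ofFn_get (B.sort (· ≤ ·)), List.map_ofFn]
  rfl

noncomputable def coordSel (A : Finset (Fin n)) (i : ℕ) :
    (Fin n → ℚ) →ₗ[ℚ] (Fin i → ℚ) :=
  LinearMap.pi (fun j : Fin i =>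
    if h : (j : ℕ) < (A.sort (· ≤ ·)).length
      then LinearMap.proj ((A.sort (· ≤ ·)).get ⟨j, h⟩) else 0)

noncomputable def dualMono (A : Finset (Fin n)) : ExtAlg n →ₗ[ℚ] ℚ :=
  ExteriorAlgebra.liftAlternating (fun i =>
    (if i = A.card then (1 : ℚ) else 0) •
      (Matrix.detRowAlternating.compLinearMap (coordSel A i)))

lemma dualMono_extMono (A B : Finset (Fin n)) :
    dualMono A (extMono n B) = if B = A then 1 else 0 := by
  rw [extMono_eq_iotaMulti, dualMono, ExteriorAlgebra.liftAlternating_apply_ιMulti]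
  rw [AlternatingMap.smul_apply, AlternatingMap.compLinearMap_apply]
  by_cases hBA : B = A
  · subst hBA
    rw [if_pos (Finset.length_sort _), if_pos rfl]
    have hdet : Matrix.detRowAlternating
        (fun i => coordSel B (B.sort (· ≤ ·)).length (Pi.single ((B.sort (· ≤ ·)).get i) 1)) =
        Matrix.det (1 : Matrix (Fin (B.sort (· ≤ ·)).length) (Fin (B.sort (· ≤ ·)).length) ℚ) := by
      congr 1
      funext i j
      rw [Matrix.one_apply]
      show coordSel B (B.sort (· ≤ ·)).length (Pi.single ((B.sort (· ≤ ·)).get i) 1) j = _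
      rw [coordSel, LinearMap.pi_apply, dif_pos j.isLt, LinearMap.proj_apply, Pi.single_apply]
      have hinj : (B.sort (· ≤ ·)).get ⟨j, j.isLt⟩ = (B.sort (· ≤ ·)).get i ↔ i = j := by
        rw [(Finset.sort_nodup B _).get_inj_iff]
        constructor
        · intro h; exact (Fin.ext (congrArg Fin.val h)).symm
        · intro h; exact Fin.ext (congrArg Fin.val h.symm)
      by_cases h : i = j
      · rw [if_pos (hinj.mpr h), if_pos h]
      · rw [if_neg (fun hh => h (hinj.mp hh)), if_neg h]
    rw [hdet, Matrix.det_one, smul_eq_mul, mul_one]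
  · rw [if_neg hBA]
    by_cases hcard : B.card = A.card
    · rw [if_pos (by rw [Finset.length_sort, hcard]), one_smul]
      -- find an element of B not in A
      have hBnotsub : ¬ B ⊆ A := fun hsub => hBA (Finset.eq_of_subset_of_card_le hsub (le_of_eq hcard.symm))
      obtain ⟨b, hbB, hbA⟩ := Finset.not_subset.mp hBnotsub
      have hbmem : b ∈ B.sort (· ≤ ·) := (Finset.mem_sort _).mpr hbB
      obtain ⟨i₀, hi₀⟩ := List.mem_iff_get.mp hbmem
      have : Matrix.detRowAlternating
          (fun i => coordSel A (B.sort (· ≤ ·)).length (Pi.single ((B.sort (· ≤ ·)).get i) 1)) =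
          Matrix.det (Matrix.of
            (fun i => coordSel A (B.sort (· ≤ ·)).length (Pi.single ((B.sort (· ≤ ·)).get i) 1))) := rfl
      rw [this, Matrix.det_eq_zero_of_row_eq_zero i₀]
      intro j
      show coordSel A (B.sort (· ≤ ·)).length (Pi.single ((B.sort (· ≤ ·)).get i₀) 1) j = 0
      rw [coordSel, LinearMap.pi_apply]
      by_cases h : (j : ℕ) < (A.sort (· ≤ ·)).length
      · rw [dif_pos h, LinearMap.proj_apply, Pi.single_apply, if_neg]
        intro hh
        apply hbA
        rw [← hi₀, ← hh]
        exact (Finset.mem_sort _).mp (List.get_mem _ _)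
      · rw [dif_neg h]
        rfl
    · rw [if_neg (by rw [Finset.length_sort]; exact hcard), zero_smul]



variable {s : ℕ} [NeZero s]

noncomputable def dualTensor (τ : Fin s → Finset (Fin n)) :
    (⨂[ℚ] (_ : Fin s), ExtAlg n) →ₗ[ℚ] ℚ :=
  PiTensorProduct.lift
    ((MultilinearMap.mkPiAlgebra ℚ (Fin s) ℚ).compLinearMap (fun i => dualMono (τ i)))

lemma dualTensor_apply (τ A : Fin s → Finset (Fin n)) :
    dualTensor τ (tensorMono n s A) = if A = τ then 1 else 0 := by
  rw [tensorMono, dualTensor, PiTensorProduct.lift.tprod, MultilinearMap.compLinearMap_apply,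
    MultilinearMap.mkPiAlgebra_apply]
  by_cases h : A = τ
  · subst h
    rw [if_pos rfl]
    apply Finset.prod_eq_one
    intro i _
    rw [dualMono_extMono, if_pos rfl]
  · rw [if_neg h]
    obtain ⟨i, hi⟩ : ∃ i, A i ≠ τ i := by
      by_contra hc
      push_neg at hc
      exact h (funext hc)
    exact Finset.prod_eq_zero (Finset.mem_univ i) (by rw [dualMono_extMono, if_neg hi])

end Dual

section Final

variable {s : ℕ} [NeZero s] (J : Fin s → Finset (Fin n))

lemma mem_F {m : Fin s} (hm : m ≠ 0) :
    m ∈ ((List.finRange s).filter (fun ℓ => ℓ ≠ 0)).toFinset :=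
  List.mem_toFinset.mpr (List.mem_filter.mpr ⟨List.mem_finRange m, by simpa⟩)

lemma mem_F' {m : Fin s} (hm : m ∈ ((List.finRange s).filter (fun ℓ => ℓ ≠ 0)).toFinset) :
    m ≠ 0 := by
  have := (List.mem_filter.mp (List.mem_toFinset.mp hm)).2
  simpa using this

lemma stateOf_final :
    stateOf J (((List.finRange s).filter (fun ℓ => ℓ ≠ 0)).toFinset) =
      Function.update J 0 (J 0 \ Finset.univ.inf J) := by
  funext i
  rcases eq_or_ne i 0 with rfl | hi0
  · rw [stateOf, if_pos rfl, Function.update_self]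
    ext x
    constructor
    · intro hx
      obtain ⟨m, hmF, hxm⟩ := Finset.mem_biUnion.mp hx
      have hm0 : m ≠ 0 := mem_F' hmF
      have hxm' := Finset.mem_sdiff.mp hxm
      have hxI : x ∈ (Finset.univ.filter (fun m' => m' < m)).inf J := by
        rcases Finset.mem_union.mp hxm'.1 with h | h
        · exact (Finset.mem_sdiff.mp h).1
        · exact absurd h hxm'.2
      refine Finset.mem_sdiff.mpr ⟨?_, ?_⟩
      · exact mem_finset_inf.mp hxI 0
          (Finset.mem_filter.mpr ⟨Finset.mem_univ _, (Fin.pos_iff_ne_zero' m).mpr hm0⟩)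
      · intro hinf
        exact hxm'.2 (mem_finset_inf.mp hinf m (Finset.mem_univ m))
    · intro hx
      have hx' := Finset.mem_sdiff.mp hx
      have hT : (Finset.univ.filter (fun m => x ∉ J m)).Nonempty := by
        by_contra hTe
        rw [Finset.not_nonempty_iff_eq_empty] at hTe
        apply hx'.2
        apply mem_finset_inf.mpr
        intro m _
        by_contra hxm
        have : m ∈ Finset.univ.filter (fun m => x ∉ J m) :=
          Finset.mem_filter.mpr ⟨Finset.mem_univ _, hxm⟩
        rw [hTe] at this
        exact Finset.notMem_empty m this
      set m₀ := (Finset.univ.filter (fun m => x ∉ J m)).min' hT with hm₀def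
      have hm₀J : x ∉ J m₀ :=
        (Finset.mem_filter.mp ((Finset.univ.filter (fun m => x ∉ J m)).min'_mem hT)).2
      have hm₀0 : m₀ ≠ 0 := fun h => hm₀J (h ▸ hx'.1)
      have hxI : x ∈ (Finset.univ.filter (fun m' => m' < m₀)).inf J := by
        apply mem_finset_inf.mpr
        intro i hi
        by_contra hxi
        have hiT : i ∈ Finset.univ.filter (fun m => x ∉ J m) :=
          Finset.mem_filter.mpr ⟨Finset.mem_univ _, hxi⟩
        have := (Finset.univ.filter (fun m => x ∉ J m)).min'_le i hiT
        exact absurd (Finset.mem_filter.mp hi).2 (not_lt.mpr this)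
      exact Finset.mem_biUnion.mpr ⟨m₀, mem_F hm₀0,
        Finset.mem_sdiff.mpr ⟨Finset.mem_union_left _ (Finset.mem_sdiff.mpr ⟨hxI, hm₀J⟩), hm₀J⟩⟩
  · rw [stateOf, if_neg hi0, if_pos (mem_F hi0), Function.update_of_ne hi0]

lemma dead_final_ne {A : Fin s → Finset (Fin n)}
    (hd : Dead J (procOf J (((List.finRange s).filter (fun ℓ => ℓ ≠ 0)).toFinset)) A) :
    A ≠ Function.update J 0 (J 0 \ Finset.univ.inf J) := by
  obtain ⟨ℓ, hℓ0, hne⟩ := hd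
  intro hA
  apply hne
  rw [hA, Function.update_of_ne hℓ0]

end Final

end Stmt16


/-- In `E^{⊗s}`, the product `∏_{ℓ=2}^{s} ∏_{j ∈ ((⋂_{m<ℓ} J_m) \ J_ℓ) ∪ J_ℓ} ε_j(ℓ)` is
nonzero: its expansion contains, with coefficient `±1`, the basis element
`ε_{J_0} ⊗ ε_{J_2} ⊗ ··· ⊗ ε_{J_s}` where `J_0 = J_1 \ ⋂_ℓ J_ℓ` (the coefficient being
read off by any linear functional dual to that basis element w.r.t. the monomial basis). -/
theorem stmt_16 (n s : ℕ) (hs : 2 ≤ s) [NeZero s] (J : Fin s → Finset (Fin n)) :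
    zdProduct n s J ≠ 0 ∧
    ∀ f : (⨂[ℚ] (_ : Fin s), ExtAlg n) →ₗ[ℚ] ℚ,
      (∀ A : Fin s → Finset (Fin n),
        f (tensorMono n s A) =
          if A = Function.update J 0 (J 0 \ Finset.univ.inf J) then 1 else 0) →
      (f (zdProduct n s J) = 1 ∨ f (zdProduct n s J) = -1) := by
  classical
  set τ : Fin s → Finset (Fin n) := Function.update J 0 (J 0 \ Finset.univ.inf J) with hτdef
  set Ls : List (Fin s) := (List.finRange s).filter (fun ℓ => ℓ ≠ 0) with hLsdef
  -- main expansion of zdProduct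
  have hstateEmpty : Stmt16.stateOf J (∅ : Finset (Fin s)) = fun _ => (∅ : Finset (Fin n)) := by
    funext i
    rw [Stmt16.stateOf]
    simp
  have hOne : (1 : ℚ) • tensorMono n s (Stmt16.stateOf J ∅) + 0 = 1 := by
    rw [add_zero, one_smul, tensorMono, hstateEmpty, PiTensorProduct.one_def]
    congr 1
    funext i
    exact Stmt16.extMono_empty
  obtain ⟨σ, r, hσ, hr, heq⟩ := Stmt16.outer_step J Ls ∅ 1 0 (Or.inl rfl)
    ((List.nodup_finRange s).filter _)
    (fun ℓ hℓ => by have := List.mem_filter.mp hℓ; simpa using this.2)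
    (Finset.notMem_empty _)
    (fun ℓ _ => Finset.notMem_empty ℓ)
    (Submodule.zero_mem _)
  rw [hOne, one_mul, Finset.empty_union] at heq
  have hzd : zdProduct n s J =
      (Ls.map (fun ℓ =>
        ((Stmt16.Sset J ℓ).sort (· ≤ ·) |>.map (fun j => genAt n s j ℓ)).prod)).prod := rfl
  rw [← hzd] at heq
  rw [Stmt16.stateOf_final J] at heq
  -- heq : zdProduct n s J = σ • tensorMono n s τ + r
  rw [Finset.empty_union] at hr
  have hf_eval : ∀ f : (⨂[ℚ] (_ : Fin s), ExtAlg n) →ₗ[ℚ] ℚ,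
      (∀ A : Fin s → Finset (Fin n), f (tensorMono n s A) = if A = τ then 1 else 0) →
      f (zdProduct n s J) = σ := by
    intro f hf
    have hvanish : ∀ x, x ∈ Stmt16.deadSpan J (Stmt16.procOf J Ls.toFinset) → f x = 0 := by
      intro x hx
      induction hx using Submodule.span_induction with
      | mem y hy =>
        obtain ⟨A, hd, rfl⟩ := hy
        rw [hf, if_neg (Stmt16.dead_final_ne J hd)]
      | zero => exact map_zero f
      | add y z _ _ hy hz => rw [map_add, hy, hz, add_zero]
      | smul c y _ hy => rw [map_smul, hy, smul_zero]
    rw [heq, map_add, map_smul, hf τ, if_pos rfl, hvanish r hr, add_zero, smul_eq_mul, mul_one]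
  constructor
  · intro h0
    have := hf_eval (Stmt16.dualTensor τ) (fun A => Stmt16.dualTensor_apply τ A)
    rw [h0, map_zero] at this
    rcases hσ with h | h <;> rw [← this] at h <;> norm_num at h
  · intro f hf
    rw [hf_eval f hf]
    exact hσ
end

section
/- In the polynomial algebra ℚ[x]/(x²) (x in even degree) consider H = (ℚ[x]/(x²))^{⊗s} and the element z = (∑_{i=1}^{s−1} 1⊗···⊗x⊗···⊗1 (x in position i)) − (s−1)·1⊗···⊗1⊗x. Then z^s = (1−s)·s!·(x⊗x⊗···⊗x), which is nonzero for s ≥ 2. -/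
open scoped TensorProduct

/-! Each `xᵢ` squares to zero, so in the multinomial expansion of `zˢ = (∑ cᵢ xᵢ)ˢ` only the
term in which every `xᵢ` occurs exactly once survives; it equals `s! (∏ cᵢ) x ⊗ ⋯ ⊗ x`, and
`∏ cᵢ = 1 - s`. The element `x ⊗ ⋯ ⊗ x` is nonzero because the multilinear map taking the
`x`-coefficient of every factor and multiplying them sends it to `1`. -/

/-- The element `1 ⊗ ··· ⊗ x ⊗ ··· ⊗ 1` (with `x` in position `i`) of
`(ℚ[x]/(x²))^{⊗s}`, the latter modelled as the `s`-fold tensor power of the dual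
numbers `ℚ[x]/(x²) = DualNumber ℚ`. -/
noncomputable def xAt (s : ℕ) (i : Fin s) : ⨂[ℚ] (_ : Fin s), DualNumber ℚ :=
  PiTensorProduct.tprod ℚ (Function.update (fun _ => (1 : DualNumber ℚ)) i DualNumber.eps)

open Finset

namespace PiTensorProduct

section

variable {ι R : Type*} {A : ι → Type*} [CommSemiring R] [∀ i, NonUnitalNonAssocSemiring (A i)]
  [∀ i, Module R (A i)] [∀ i, SMulCommClass R (A i) (A i)] [∀ i, IsScalarTower R (A i) (A i)]

-- `IsScalarTower.right` does not apply: the `SMul` of `instAlgebra` does not unify with `instSMul`.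
instance instIsScalarTowerSelf : IsScalarTower R (⨂[R] i, A i) (⨂[R] i, A i) :=
  ⟨fun r x y => by
    rw [smul_eq_mul, smul_eq_mul, mul_def, mul_def, map_smul, LinearMap.smul_apply]⟩

instance instSMulCommClassSelf : SMulCommClass R (⨂[R] i, A i) (⨂[R] i, A i) :=
  ⟨fun r x y => by rw [smul_eq_mul, smul_eq_mul, mul_def, mul_def, map_smul]⟩

end

variable {ι R : Type*} [CommSemiring R]

theorem tprod_mulSingle_sq_eq_zero [DecidableEq ι] {A : Type*} [CommSemiring A] [Algebra R A]
    {x : A} (hx : x ^ 2 = 0) (i : ι) : tprod R (Pi.mulSingle (M := fun _ => A) i x) ^ 2 = 0 := by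
  rw [← tprodMonoidHom_apply, ← map_pow, ← Pi.mulSingle_pow, hx]
  exact (tprod R).map_coord_zero i (Pi.mulSingle_eq_same i 0)

variable [Fintype ι]

theorem prod_tprod_mulSingle [DecidableEq ι] {A : Type*} [CommSemiring A] [Algebra R A]
    (x : ι → A) : ∏ i, tprod R (Pi.mulSingle i (x i)) = tprod R x := by
  simp_rw [← tprodMonoidHom_apply, ← map_prod, univ_prod_mulSingle]

theorem tprod_eps_ne_zero [Nontrivial R] :
    tprod R (fun _ : ι => (DualNumber.eps : DualNumber R)) ≠ 0 := by
  intro h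
  have := congrArg (lift ((MultilinearMap.mkPiAlgebra R ι R).compLinearMap
    (fun _ => TrivSqZeroExt.sndHom R R))) h
  rw [lift.tprod, map_zero] at this
  simp only [MultilinearMap.compLinearMap_apply, MultilinearMap.mkPiAlgebra_apply,
    TrivSqZeroExt.sndHom_apply, DualNumber.eps, TrivSqZeroExt.snd_inr, prod_const_one] at this
  exact one_ne_zero this

end PiTensorProduct

theorem Fintype.exists_two_le_of_sum_eq_card {ι : Type*} [Fintype ι] {k : ι → ℕ}
    (hk : ∑ i, k i = Fintype.card ι) (hne : k ≠ fun _ => 1) : ∃ i, 2 ≤ k i := by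
  by_contra! hle
  refine hne (funext fun i => ?_)
  have hsum : ∑ i, k i = ∑ _ : ι, 1 := by simpa using hk
  exact (sum_eq_sum_iff_of_le fun j _ => Nat.le_of_lt_succ (hle j)).mp hsum i (mem_univ i)

theorem sum_pow_card_eq_factorial_mul_prod_of_sq_eq_zero {ι R : Type*} [Fintype ι]
    [CommSemiring R] (a : ι → R) (ha : ∀ i, a i ^ 2 = 0) :
    (∑ i, a i) ^ Fintype.card ι = (Fintype.card ι).factorial * ∏ i, a i := by
  classical
  have hone : (fun _ => 1) ∈ (univ : Finset ι).piAntidiag (Fintype.card ι) := by simp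
  rw [sum_pow_eq_sum_piAntidiag, sum_eq_single_of_mem _ hone]
  · simp [Nat.multinomial]
  · intro k hk hne
    obtain ⟨i, hi⟩ := Fintype.exists_two_le_of_sum_eq_card (mem_piAntidiag.mp hk).1 hne
    rw [prod_eq_zero (f := fun j => a j ^ k j) (mem_univ i) (pow_eq_zero_of_le hi (ha i)),
      mul_zero]

theorem xAt_sq (s : ℕ) (i : Fin s) : xAt s i ^ 2 = 0 :=
  PiTensorProduct.tprod_mulSingle_sq_eq_zero (by rw [sq, DualNumber.eps_mul_eps]) i

theorem prod_xAt (s : ℕ) :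
    ∏ i, xAt s i = PiTensorProduct.tprod ℚ (fun _ : Fin s => DualNumber.eps) :=
  PiTensorProduct.prod_tprod_mulSingle _

/-- For `z = (∑_{i=1}^{s-1} 1 ⊗ ··· ⊗ x ⊗ ··· ⊗ 1) − (s−1)·(1 ⊗ ··· ⊗ 1 ⊗ x)` in
`(ℚ[x]/(x²))^{⊗s}` (`x` of even degree), `z^s = (1−s)·s!·(x ⊗ ··· ⊗ x)`, which is
nonzero for `s ≥ 2`. -/
theorem stmt_17 (s : ℕ) (hs : 2 ≤ s) :
    (∑ i : Fin s, (if i.val = s - 1 then -((s : ℚ) - 1) else 1) • xAt s i) ^ s =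
      ((1 - (s : ℚ)) * s.factorial) •
        PiTensorProduct.tprod ℚ (fun _ : Fin s => DualNumber.eps) ∧
    (∑ i : Fin s, (if i.val = s - 1 then -((s : ℚ) - 1) else 1) • xAt s i) ^ s ≠ 0 := by
  set c : Fin s → ℚ := fun i => if i.val = s - 1 then -((s : ℚ) - 1) else 1
  have hc : ∏ i, c i = 1 - s := by
    rw [prod_eq_single (⟨s - 1, by omega⟩ : Fin s) (fun i _ hi => if_neg fun h => hi (Fin.ext h))
      (by simp)]
    simp
  have hpow : (∑ i, c i • xAt s i) ^ s = ((1 - (s : ℚ)) * s.factorial) •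
      PiTensorProduct.tprod ℚ (fun _ : Fin s => DualNumber.eps) := by
    have := sum_pow_card_eq_factorial_mul_prod_of_sq_eq_zero (fun i => c i • xAt s i)
      fun i => by rw [smul_pow, xAt_sq, smul_zero]
    rw [Fintype.card_fin, prod_smul, hc, prod_xAt] at this
    rw [this, ← nsmul_eq_mul, ← Nat.cast_smul_eq_nsmul ℚ, smul_smul, mul_comm]
  have hs1 : 1 - (s : ℚ) ≠ 0 := by
    have : (2 : ℚ) ≤ s := by exact_mod_cast hs
    linarith
  refine ⟨hpow, hpow ▸ smul_ne_zero ?_ PiTensorProduct.tprod_eps_ne_zero⟩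
  exact mul_ne_zero hs1 (by positivity)
end
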